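/- For the one-dimensional logistic model with φ(t) = 1/(1 + e^t), loss L_pred(θ, P_{θ0}) = E_{P_{θ0}}[|p_θ(Y|X) − p_{θ0}(Y|X)|] where p_θ(y|x) = 1/(1+e^{−yθx}) and X uniform on {±1}, the separation satisfies d_{L_pred}(P_{θ0}, P_{θ1}) := inf_θ {L_pred(θ, P_{θ0}) + L_pred(θ, P_{θ1})} = |φ(θ0) − φ(θ1)|. -/
import Mathlib


/-- The sign `±1` associated with a Boolean. -/
def sgn (b : Bool) : ℝ := if b then 1 else -1

/-- `φ(t) = 1/(1 + e^t)`. -/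
noncomputable def phi (t : ℝ) : ℝ := 1 / (1 + Real.exp t)

/-- Conditional probability `p_θ(y | x) = 1/(1 + e^{-yθx})` for `(x, y) ∈ {-1,1}²`. -/
noncomputable def pcond (θ : ℝ) (xy : Bool × Bool) : ℝ :=
  1 / (1 + Real.exp (-(sgn xy.2) * θ * sgn xy.1))

/-- Joint p.m.f. of the logistic model with `x` uniform on `{-1, 1}`. -/
noncomputable def pJoint (θ : ℝ) (xy : Bool × Bool) : ℝ := (1 / 2) * pcond θ xy

/-- `L_pred(θ, P_{θ₀}) = E_{P_{θ₀}}[|p_θ(Y|X) - p_{θ₀}(Y|X)|]`. -/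
noncomputable def Lpred (θ θ0 : ℝ) : ℝ :=
  ∑ z : Bool × Bool, pJoint θ0 z * |pcond θ z - pcond θ0 z|

lemma phi_neg (t : ℝ) : phi (-t) = 1 - phi t := by
  unfold phi
  have h : (1 : ℝ) + Real.exp t ≠ 0 := by positivity
  have h' : (1 : ℝ) + Real.exp (-t) ≠ 0 := by positivity
  rw [Real.exp_neg]
  have he : Real.exp t ≠ 0 := Real.exp_ne_zero t
  field_simp
  ring

lemma pcond_eq (θ : ℝ) (z : Bool × Bool) :
    pcond θ z = if z.1 = z.2 then phi (-θ) else phi θ := by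
  rcases z with ⟨x, y⟩
  cases x <;> cases y <;> simp [pcond, sgn, phi]

lemma lpred_eq (θ θ0 : ℝ) : Lpred θ θ0 = |phi θ - phi θ0| := by
  unfold Lpred pJoint
  rw [Fintype.sum_prod_type]
  simp only [pcond_eq, Fintype.sum_bool]
  simp only [phi_neg]
  simp only [if_true, if_false]
  norm_num
  rw [abs_sub_comm (phi θ0)]
  ring

/-- The separation for the prediction loss of the one-dimensional logistic model:
`d_{L_pred}(P_{θ₀}, P_{θ₁}) = inf_θ {L_pred(θ, P_{θ₀}) + L_pred(θ, P_{θ₁})} = |φ(θ₀) - φ(θ₁)|`. -/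
theorem statement11 (θ0 θ1 : ℝ) :
    (⨅ θ : ℝ, (Lpred θ θ0 + Lpred θ θ1)) = |phi θ0 - phi θ1| := by
  have hval : ∀ θ, Lpred θ θ0 + Lpred θ θ1 = |phi θ - phi θ0| + |phi θ - phi θ1| := by
    intro θ; rw [lpred_eq, lpred_eq]
  apply le_antisymm
  · calc (⨅ θ : ℝ, (Lpred θ θ0 + Lpred θ θ1)) ≤ Lpred θ0 θ0 + Lpred θ0 θ1 := by
          apply ciInf_le
          refine ⟨0, ?_⟩
          rintro x ⟨θ, rfl⟩
          dsimp only
          rw [hval]; positivity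
       _ = |phi θ0 - phi θ1| := by rw [hval]; simp
  · apply le_ciInf
    intro θ
    rw [hval]
    calc |phi θ0 - phi θ1| ≤ |phi θ0 - phi θ| + |phi θ - phi θ1| := abs_sub_le _ _ _
      _ = |phi θ - phi θ0| + |phi θ - phi θ1| := by rw [abs_sub_comm (phi θ0)]
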